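/- arXiv:2005.06768 — 3 statements merged into one kernel-verified Lean document; each statement's English description precedes it below -/
import Mathlib

section
/- Let v¹,…,v^{r+s} ∈ ℝⁿ be vectors such that the family (vⁱ)_{i=1}^r is linearly independent. Let z ∈ ℝⁿ \ {0} be given as z = Σ_{i=1}^{r+s} αᵢ vⁱ for reals α₁,…,α_{r+s} with α_{r+1},…,α_{r+s} > 0. Then there exist an index set 𝓘 ⊂ {r+1,…,r+s} and reals ᾱᵢ for i ∈ {1,…,r} ∪ 𝓘, with ᾱᵢ > 0 for all i ∈ 𝓘, such that the family (vⁱ)_{i ∈ {1,…,r} ∪ 𝓘} is linearly independent and z = Σ_{i ∈ {1,…,r} ∪ 𝓘} ᾱᵢ vⁱ. -/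
/-- Carathéodory-type lemma: given a linearly independent core `(v i)_{i<r}` and a
representation `z = ∑ αᵢ vⁱ` with positive coefficients on the tail indices,
one can select a subset `𝓘` of the tail indices so that the core together with `𝓘`
is linearly independent, the new tail coefficients are positive, and `z` is represented
by the selected family. -/
theorem stmt0 (n r s : ℕ) (v : Fin (r + s) → EuclideanSpace ℝ (Fin n))
    (hli : LinearIndependent ℝ (fun i : {i : Fin (r + s) // (i : ℕ) < r} => v i))
    (z : EuclideanSpace ℝ (Fin n)) (hz : z ≠ 0)
    (α : Fin (r + s) → ℝ) (hrep : z = ∑ i, α i • v i)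
    (hpos : ∀ i : Fin (r + s), r ≤ (i : ℕ) → 0 < α i) :
    ∃ (𝓘 : Finset (Fin (r + s))) (β : Fin (r + s) → ℝ),
      (∀ i ∈ 𝓘, r ≤ (i : ℕ)) ∧
      (∀ i ∈ 𝓘, 0 < β i) ∧
      LinearIndependent ℝ (fun i : {i : Fin (r + s) // (i : ℕ) < r ∨ i ∈ 𝓘} => v i) ∧
      z = ∑ i ∈ (Finset.univ.filter (fun i : Fin (r + s) => (i : ℕ) < r)) ∪ 𝓘, β i • v i := by
  classical
  set core : Finset (Fin (r + s)) :=
    Finset.univ.filter (fun i : Fin (r + s) => (i : ℕ) < r) with hcore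
  have key : ∀ (S : Finset (Fin (r + s))) (G : Fin (r + s) → ℝ),
      (∀ i ∈ S, r ≤ (i : ℕ)) → (∑ i ∈ core ∪ S, G i • v i = 0) → (∀ i ∈ S, G i = 0) →
      ∀ i : Fin (r + s), (i : ℕ) < r → G i = 0 := by
    intro S G hS hsum hGS
    have hdisj : Disjoint core S := by
      rw [Finset.disjoint_left]
      intro a ha haS
      have h1 : (a : ℕ) < r := by simpa [hcore] using ha
      exact absurd (hS a haS) (by omega)
    rw [Finset.sum_union hdisj] at hsum
    have h2 : ∑ i ∈ S, G i • v i = 0 :=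
      Finset.sum_eq_zero (fun i hi => by rw [hGS i hi, zero_smul])
    rw [h2, add_zero] at hsum
    have h3 : ∑ i ∈ core, G i • v i
        = ∑ i : {i : Fin (r + s) // (i : ℕ) < r}, G i • v i :=
      Finset.sum_subtype core (by simp [hcore]) _
    rw [h3] at hsum
    have h4 := Fintype.linearIndependent_iff.mp hli (fun i => G i) hsum
    intro i hi
    exact h4 ⟨i, hi⟩
  suffices h : ∀ (S : Finset (Fin (r + s))), (∀ i ∈ S, r ≤ (i : ℕ)) →
      ∀ β : Fin (r + s) → ℝ, (∀ i ∈ S, 0 < β i) →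
      z = ∑ i ∈ core ∪ S, β i • v i →
      ∃ (𝓘 : Finset (Fin (r + s))) (β' : Fin (r + s) → ℝ),
        (∀ i ∈ 𝓘, r ≤ (i : ℕ)) ∧ (∀ i ∈ 𝓘, 0 < β' i) ∧
        LinearIndependent ℝ (fun i : {i : Fin (r + s) // (i : ℕ) < r ∨ i ∈ 𝓘} => v i) ∧
        z = ∑ i ∈ core ∪ 𝓘, β' i • v i by
    refine h (Finset.univ.filter (fun i : Fin (r + s) => r ≤ (i : ℕ))) (by simp) α
      (fun i hi => hpos i (by simpa using hi)) ?_
    have huniv : core ∪ Finset.univ.filter (fun i : Fin (r + s) => r ≤ (i : ℕ))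
        = Finset.univ := by
      ext i; simp [hcore]; omega
    rw [huniv]; exact hrep
  intro S
  induction S using Finset.strongInduction with
  | _ S ih =>
  intro hS β hβ hrepS
  by_cases hind : LinearIndependent ℝ (fun i : {i : Fin (r + s) // (i : ℕ) < r ∨ i ∈ S} => v i)
  · exact ⟨S, β, hS, hβ, hind, hrepS⟩
  · obtain ⟨g, hgsum, i₁, hi₁⟩ := Fintype.not_linearIndependent_iff.mp hind
    set G₀ : Fin (r + s) → ℝ :=
      fun i => if h : ((i : ℕ) < r ∨ i ∈ S) then g ⟨i, h⟩ else 0 with hG₀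
    have hmem : ∀ x : Fin (r + s), x ∈ core ∪ S ↔ ((x : ℕ) < r ∨ x ∈ S) := by
      intro x; simp [hcore]
    have hGg : ∀ a : {i : Fin (r + s) // (i : ℕ) < r ∨ i ∈ S}, G₀ (a : Fin (r + s)) = g a := by
      intro a
      simp only [hG₀, dif_pos a.2, Subtype.coe_eta]
    have hsum₀ : ∑ i ∈ core ∪ S, G₀ i • v i = 0 := by
      rw [Finset.sum_subtype (core ∪ S) hmem (fun i => G₀ i • v i), ← hgsum]
      refine Finset.sum_congr rfl (fun a _ => ?_)
      rw [hGg a]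
    have hex : ∃ j ∈ S, G₀ j ≠ 0 := by
      by_contra hcon
      push_neg at hcon
      have hcore0 := key S G₀ hS hsum₀ hcon
      apply hi₁
      rw [← hGg i₁]
      rcases i₁.2 with h | h
      · exact hcore0 _ h
      · exact hcon _ h
    obtain ⟨G, hGsum, j, hjS, hGj⟩ : ∃ G : Fin (r + s) → ℝ,
        (∑ i ∈ core ∪ S, G i • v i = 0) ∧ ∃ j ∈ S, 0 < G j := by
      obtain ⟨j, hjS, hGj⟩ := hex
      rcases lt_or_gt_of_ne hGj with h | h
      · refine ⟨fun i => -G₀ i, ?_, j, hjS, by simpa using neg_pos.mpr h⟩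
        have : ∑ i ∈ core ∪ S, (-G₀ i) • v i = -∑ i ∈ core ∪ S, G₀ i • v i := by
          rw [← Finset.sum_neg_distrib]
          exact Finset.sum_congr rfl (fun i _ => by rw [neg_smul])
        rw [this, hsum₀, neg_zero]
      · exact ⟨G₀, hsum₀, j, hjS, h⟩
    have hT : (S.filter (fun i => 0 < G i)).Nonempty :=
      ⟨j, Finset.mem_filter.mpr ⟨hjS, hGj⟩⟩
    obtain ⟨i₀, hi₀T, hmin⟩ := Finset.exists_min_image _ (fun i => β i / G i) hT
    obtain ⟨hi₀S, hGi₀⟩ := Finset.mem_filter.mp hi₀T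
    set t : ℝ := β i₀ / G i₀ with ht
    have ht0 : 0 < t := div_pos (hβ i₀ hi₀S) hGi₀
    set β' : Fin (r + s) → ℝ := fun i => β i - t * G i with hβ'
    have hβ'nonneg : ∀ i ∈ S, 0 ≤ β' i := by
      intro i hiS
      by_cases hGi : 0 < G i
      · have hle : t ≤ β i / G i := hmin i (Finset.mem_filter.mpr ⟨hiS, hGi⟩)
        have hmul := (le_div_iff₀ hGi).mp hle
        simp only [hβ']
        linarith
      · push_neg at hGi
        have h1 : t * G i ≤ 0 := mul_nonpos_of_nonneg_of_nonpos ht0.le hGi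
        have hb := hβ i hiS
        simp only [hβ']
        linarith
    have hβ'i₀ : β' i₀ = 0 := by
      simp only [hβ', ht]
      rw [div_mul_cancel₀ _ hGi₀.ne', sub_self]
    set S' : Finset (Fin (r + s)) := S.filter (fun i => β' i ≠ 0) with hSdef
    have hssub : S' ⊂ S := by
      refine (Finset.ssubset_iff_of_subset (Finset.filter_subset _ _)).mpr ?_
      exact ⟨i₀, hi₀S, by simp [hSdef, hβ'i₀]⟩
    have hrepS' : z = ∑ i ∈ core ∪ S', β' i • v i := by
      have h1 : ∑ i ∈ core ∪ S, β' i • v i = z := by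
        calc ∑ i ∈ core ∪ S, β' i • v i
            = ∑ i ∈ core ∪ S, (β i • v i - t • G i • v i) :=
              Finset.sum_congr rfl (fun i _ => by
                simp only [hβ', sub_smul, smul_smul])
          _ = (∑ i ∈ core ∪ S, β i • v i) - t • ∑ i ∈ core ∪ S, G i • v i := by
              rw [Finset.sum_sub_distrib, Finset.smul_sum]
          _ = z := by rw [hGsum, ← hrepS, smul_zero, sub_zero]
      rw [← h1]
      refine (Finset.sum_subset
        (Finset.union_subset_union_right (Finset.filter_subset _ _)) ?_).symm
      intro x hx hx'
      have hxS : x ∈ S := by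
        rcases Finset.mem_union.mp hx with h | h
        · exact absurd (Finset.mem_union_left _ h) hx'
        · exact h
      have hx0 : β' x = 0 := by
        by_contra hne
        exact hx' (Finset.mem_union_right _ (Finset.mem_filter.mpr ⟨hxS, hne⟩))
      rw [hx0, zero_smul]
    exact ih S' hssub (fun i hi => hS i (Finset.filter_subset _ _ hi)) β'
      (fun i hi => lt_of_le_of_ne (hβ'nonneg i (Finset.filter_subset _ _ hi))
        (Ne.symm (Finset.mem_filter.mp hi).2))
      hrepS'
end

section
/- Let Γ: ℝⁿ ⇉ ℝᵐ be given by Γ(x) = {y : hᵢ(x,y) ≤ 0 for i ∈ I, hᵢ(x,y) = 0 for i ∈ J} with functions h₁,…,h_p. Suppose Γ is R-regular at a point (x̄, ȳ) ∈ gph Γ w.r.t. dom Γ, all hᵢ are continuous at (x̄, ȳ), and hᵢ(x, ·) is continuous on ℝᵐ for every x ∈ dom Γ in some neighborhood of x̄. Then Γ is inner semicontinuous at (x̄, ȳ) w.r.t. dom Γ: for every sequence x^k ∈ dom Γ with x^k → x̄ there exists a sequence y^k ∈ Γ(x^k) (for large k) with y^k → ȳ. -/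
/-- max of finitely many reals together with 0. -/
noncomputable def foldMax {ι : Type*} (s : Finset ι) (f : ι → ℝ) : ℝ := s.fold max 0 f

lemma foldMax_eq_zero {ι : Type*} [DecidableEq ι] {s : Finset ι} {f : ι → ℝ}
    (hf : ∀ i ∈ s, f i ≤ 0) : foldMax s f = 0 := by
  induction s using Finset.induction with
  | empty => simp [foldMax]
  | @insert a s ha ih =>
    rw [foldMax, Finset.fold_insert ha]
    rw [foldMax] at ih
    rw [ih fun i hi => hf i (Finset.mem_insert_of_mem hi)]
    exact max_eq_right (hf a (Finset.mem_insert_self a s))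

lemma tendsto_foldMax {ι : Type*} [DecidableEq ι] {s : Finset ι} {g : ι → ℕ → ℝ} {L : ι → ℝ}
    (hg : ∀ i ∈ s, Filter.Tendsto (g i) Filter.atTop (nhds (L i))) :
    Filter.Tendsto (fun k => foldMax s (fun i => g i k)) Filter.atTop (nhds (foldMax s L)) := by
  induction s using Finset.induction with
  | empty => simpa [foldMax] using tendsto_const_nhds
  | @insert a s ha ih =>
    simp only [foldMax, Finset.fold_insert ha]
    exact (hg a (Finset.mem_insert_self a s)).max
      (ih fun i hi => hg i (Finset.mem_insert_of_mem hi))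

/-- R-regularity of a constraint mapping implies its inner semicontinuity w.r.t. its domain. -/
theorem stmt2 (n m p : ℕ) (I J : Finset (Fin p))
    (h : Fin p → EuclideanSpace ℝ (Fin n) → EuclideanSpace ℝ (Fin m) → ℝ)
    (Γ : EuclideanSpace ℝ (Fin n) → Set (EuclideanSpace ℝ (Fin m)))
    (hΓ : ∀ x, Γ x = {y | (∀ i ∈ I, h i x y ≤ 0) ∧ (∀ i ∈ J, h i x y = 0)})
    (xbar : EuclideanSpace ℝ (Fin n)) (ybar : EuclideanSpace ℝ (Fin m))
    (hmem : ybar ∈ Γ xbar)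
    -- R-regularity at (xbar, ybar) w.r.t. dom Γ:
    (hreg : ∃ κ : ℝ, 0 < κ ∧ ∃ U ∈ nhds (xbar, ybar), ∀ x y, (x, y) ∈ U → (Γ x).Nonempty →
      Metric.infDist y (Γ x) ≤
        κ * max (foldMax I (fun i => h i x y)) (foldMax J (fun i => |h i x y|)))
    -- continuity of each hᵢ at (xbar, ybar):
    (hcont : ∀ i, ContinuousAt (fun q : EuclideanSpace ℝ (Fin n) × EuclideanSpace ℝ (Fin m) =>
      h i q.1 q.2) (xbar, ybar))
    -- continuity of hᵢ(x, ·) for x ∈ dom Γ near xbar: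
    (hconty : ∃ V ∈ nhds xbar, ∀ x ∈ V, (Γ x).Nonempty → ∀ i, Continuous (h i x)) :
    ∀ xk : ℕ → EuclideanSpace ℝ (Fin n), (∀ k, (Γ (xk k)).Nonempty) →
      Filter.Tendsto xk Filter.atTop (nhds xbar) →
      ∃ yk : ℕ → EuclideanSpace ℝ (Fin m),
        Filter.Tendsto yk Filter.atTop (nhds ybar) ∧
        ∀ᶠ k in Filter.atTop, yk k ∈ Γ (xk k) := by
  intro xk hne hx
  obtain ⟨κ, hκ, U, hU, hUreg⟩ := hreg
  rw [hΓ] at hmem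
  obtain ⟨hmemI, hmemJ⟩ := hmem
  have hxy : Filter.Tendsto (fun k => (xk k, ybar)) Filter.atTop (nhds (xbar, ybar)) :=
    hx.prodMk_nhds tendsto_const_nhds
  set d : ℕ → ℝ := fun k => Metric.infDist ybar (Γ (xk k)) with hd
  have htI : Filter.Tendsto (fun k => foldMax I (fun i => h i (xk k) ybar)) Filter.atTop
      (nhds (foldMax I (fun i => h i xbar ybar))) :=
    tendsto_foldMax fun i _ => (hcont i).tendsto.comp hxy
  have htJ : Filter.Tendsto (fun k => foldMax J (fun i => |h i (xk k) ybar|)) Filter.atTop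
      (nhds (foldMax J (fun i => |h i xbar ybar|))) :=
    tendsto_foldMax fun i _ => (continuous_abs.tendsto _).comp ((hcont i).tendsto.comp hxy)
  have hI0 : foldMax I (fun i => h i xbar ybar) = 0 := foldMax_eq_zero hmemI
  have hJ0 : foldMax J (fun i => |h i xbar ybar|) = 0 :=
    foldMax_eq_zero fun i hi => by rw [hmemJ i hi]; simp
  have hg0 : Filter.Tendsto
      (fun k => κ * max (foldMax I (fun i => h i (xk k) ybar))
        (foldMax J (fun i => |h i (xk k) ybar|))) Filter.atTop (nhds 0) := by
    have := (tendsto_const_nhds (x := κ)).mul (htI.max htJ)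
    simpa [hI0, hJ0] using this
  have hd0 : Filter.Tendsto d Filter.atTop (nhds 0) := by
    apply squeeze_zero' (Filter.Eventually.of_forall fun k => Metric.infDist_nonneg) _ hg0
    filter_upwards [hxy.eventually_mem hU] with k hk
    exact hUreg (xk k) ybar hk (hne k)
  have hchoose : ∀ k : ℕ, ∃ y ∈ Γ (xk k), dist ybar y < d k + 1 / (k + 1) := by
    intro k
    rw [← Metric.infDist_lt_iff (hne k)]
    have : (0 : ℝ) < 1 / (k + 1) := by positivity
    linarith
  choose yk hykmem hyk using hchoose
  refine ⟨yk, ?_, Filter.Eventually.of_forall hykmem⟩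
  rw [tendsto_iff_dist_tendsto_zero]
  apply squeeze_zero (fun k => dist_nonneg) (fun k => ?_)
    (by simpa using hd0.add tendsto_one_div_add_atTop_nhds_zero_nat)
  rw [dist_comm]
  exact le_of_lt (by simpa [one_div] using hyk k)
end

section
/- The bilevel problem min_{x,y} {(x − 3/4)² + y² : y ∈ S(x)}, where S is the solution map of min_y {(x+y−2)² : y² ≤ x, 0 ≤ y}, has the unique global minimizer (x̄, ȳ) = (1/4, 1/2). -/
/-- The bilevel problem min_{x,y} {(x − 3/4)² + y² : y ∈ S(x)}, where S is the solution map
of min_y {(x+y−2)² : y² ≤ x, 0 ≤ y}, has the unique global minimizer (1/4, 1/2). -/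
theorem stmt15 (S : ℝ → Set ℝ)
    (hS : ∀ x, S x = {y : ℝ | 0 ≤ y ∧ y ^ 2 ≤ x ∧
      ∀ z : ℝ, 0 ≤ z → z ^ 2 ≤ x → (x + y - 2) ^ 2 ≤ (x + z - 2) ^ 2})
    (F : ℝ → ℝ → ℝ) (hF : ∀ x y, F x y = (x - 3 / 4) ^ 2 + y ^ 2) :
    (1 / 2 : ℝ) ∈ S (1 / 4) ∧
    ∀ x y : ℝ, y ∈ S x → (x, y) ≠ ((1 / 4 : ℝ), (1 / 2 : ℝ)) →
      F (1 / 4) (1 / 2) < F x y := by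
  constructor
  · rw [hS]
    refine ⟨by norm_num, by norm_num, fun z hz hz2 => by nlinarith⟩
  · intro x y hy hne
    rw [hS] at hy
    obtain ⟨hy0, hy2, hopt⟩ := hy
    rw [hF, hF]
    have hx0 : 0 ≤ x := le_trans (sq_nonneg y) hy2
    rcases le_or_gt x 1 with hx1 | hx1
    · set s := Real.sqrt x with hs
      have hs0 : 0 ≤ s := Real.sqrt_nonneg x
      have hs2 : s ^ 2 = x := Real.sq_sqrt hx0
      have hs1 : s ≤ 1 := by nlinarith
      have hys : y ≤ s := by nlinarith
      have hopt' := hopt s hs0 (le_of_eq hs2)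
      have hsy : s ≤ y := by nlinarith
      have hyx : y ^ 2 = x := by nlinarith
      rcases eq_or_ne x (1 / 4) with h | h
      · have hy12 : y = 1 / 2 := by nlinarith
        exact absurd (by rw [h, hy12]) hne
      · have hne' : x - 1 / 4 ≠ 0 := sub_ne_zero.2 h
        have : (x - 1 / 4) ^ 2 > 0 := by positivity
        nlinarith
    · rcases le_or_gt x 2 with hx2 | hx2
      · have h1 : (0 : ℝ) ≤ 2 - x := by linarith
        have h2 : (2 - x) ^ 2 ≤ x := by nlinarith
        have h3 := hopt (2 - x) h1 h2
        have hy' : y = 2 - x := by nlinarith [sq_nonneg (x + y - 2)]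
        nlinarith [sq_nonneg (x - 11 / 8)]
      · nlinarith [sq_nonneg y]
end
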